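/- In the semigroup S on {γ_k : k ∈ ℕ⁺} ∪ {δ_k : k ∈ ℕ⁺} with multiplication γ_{k₁}γ_{k₂} = γ_{k₁}δ_{k₂} = γ_{k₁k₂} and δ_{k₁}γ_{k₂} = δ_{k₁}δ_{k₂} = δ_{k₁k₂}, two elements are 𝓓-equivalent if and only if they are equal or there is a positive integer k with both elements in {γ_k, δ_k}. Moreover 𝓓 = 𝓙 on S. -/
import Mathlib

/-- The abstract semigroup on two copies of the positive integers. -/
inductive GD
  | g : ℕ+ → GD
  | d : ℕ+ → GD
deriving DecidableEq

/-- Multiplication: `γ_{k₁}γ_{k₂} = γ_{k₁}δ_{k₂} = γ_{k₁k₂}`, `δ_{k₁}γ_{k₂} = δ_{k₁}δ_{k₂} = δ_{k₁k₂}`. -/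
def GD.mul : GD → GD → GD
  | GD.g k, GD.g m => GD.g (k * m)
  | GD.g k, GD.d m => GD.g (k * m)
  | GD.d k, GD.g m => GD.d (k * m)
  | GD.d k, GD.d m => GD.d (k * m)

/-- `aS¹ = {a} ∪ aS`. -/
def rIdeal (a : GD) : Set GD := insert a {x : GD | ∃ s : GD, x = GD.mul a s}

/-- `S¹a = {a} ∪ Sa`. -/
def lIdeal (a : GD) : Set GD := insert a {x : GD | ∃ s : GD, x = GD.mul s a}

/-- `S¹aS¹`. -/
def jIdeal (a : GD) : Set GD :=
  {x : GD | x = a ∨ (∃ s : GD, x = GD.mul a s) ∨ (∃ s : GD, x = GD.mul s a) ∨ (∃ s t : GD, x = GD.mul (GD.mul s a) t)}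

/-- Green's relation `𝓡`. -/
def rRel (a b : GD) : Prop := rIdeal a = rIdeal b

/-- Green's relation `𝓛`. -/
def lRel (a b : GD) : Prop := lIdeal a = lIdeal b

/-- Green's relation `𝓓 = 𝓛 ∘ 𝓡`. -/
def dRel (a b : GD) : Prop := ∃ c, lRel a c ∧ rRel c b

/-- Green's relation `𝓙`. -/
def jRel (a b : GD) : Prop := jIdeal a = jIdeal b

/-- The index of an element. -/
def GD.idx : GD → ℕ+
  | GD.g k => k
  | GD.d k => k

/-- The letter of an element: `true` for γ. -/
def GD.isG : GD → Bool
  | GD.g _ => true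
  | GD.d _ => false

lemma GD.idx_mul (a b : GD) : (GD.mul a b).idx = a.idx * b.idx := by
  cases a <;> cases b <;> rfl

lemma GD.isG_mul (a b : GD) : (GD.mul a b).isG = a.isG := by
  cases a <;> cases b <;> rfl

lemma GD.eq_of (a b : GD) (h1 : a.isG = b.isG) (h2 : a.idx = b.idx) : a = b := by
  cases a <;> cases b <;> simp_all [GD.isG, GD.idx]

lemma mem_lIdeal (a x : GD) : x ∈ lIdeal a ↔ a.idx ∣ x.idx := by
  constructor
  · rintro (rfl | ⟨s, rfl⟩)
    · exact dvd_refl _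
    · rw [GD.idx_mul]; exact dvd_mul_left _ _
  · rintro ⟨c, hc⟩
    right
    refine ⟨if x.isG then GD.g c else GD.d c, GD.eq_of _ _ ?_ ?_⟩
    · rw [GD.isG_mul]; cases hx : x.isG <;> simp [hx, GD.isG]
    · rw [GD.idx_mul, hc]
      cases hx : x.isG <;> simp [hx, GD.idx, mul_comm]

lemma mem_jIdeal (a x : GD) : x ∈ jIdeal a ↔ a.idx ∣ x.idx := by
  constructor
  · rintro (rfl | ⟨s, rfl⟩ | ⟨s, rfl⟩ | ⟨s, t, rfl⟩)
    · exact dvd_refl _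
    · rw [GD.idx_mul]; exact dvd_mul_right _ _
    · rw [GD.idx_mul]; exact dvd_mul_left _ _
    · rw [GD.idx_mul, GD.idx_mul]
      exact Dvd.dvd.mul_right (dvd_mul_left _ _) _
  · intro h
    have := (mem_lIdeal a x).2 h
    rcases this with rfl | ⟨s, hs⟩
    · exact Or.inl rfl
    · exact Or.inr (Or.inr (Or.inl ⟨s, hs⟩))

lemma mem_rIdeal (a x : GD) : x ∈ rIdeal a ↔ (x.isG = a.isG ∧ a.idx ∣ x.idx) := by
  constructor
  · rintro (rfl | ⟨s, rfl⟩)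
    · exact ⟨rfl, dvd_refl _⟩
    · exact ⟨GD.isG_mul a s, by rw [GD.idx_mul]; exact dvd_mul_right _ _⟩
  · rintro ⟨h1, c, hc⟩
    right
    exact ⟨GD.g c, GD.eq_of _ _ (by rw [GD.isG_mul, h1]) (by rw [GD.idx_mul, hc]; rfl)⟩

lemma pnat_dvd_antisymm {m n : ℕ+} (h1 : m ∣ n) (h2 : n ∣ m) : m = n := by
  have := Nat.dvd_antisymm (PNat.dvd_iff.1 h1) (PNat.dvd_iff.1 h2)
  exact PNat.coe_injective this

lemma lRel_iff (a b : GD) : lRel a b ↔ a.idx = b.idx := by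
  constructor
  · intro h
    have h1 : b ∈ lIdeal a := h ▸ (mem_lIdeal b b).2 (dvd_refl _)
    have h2 : a ∈ lIdeal b := h ▸ (mem_lIdeal a a).2 (dvd_refl _)
    exact pnat_dvd_antisymm ((mem_lIdeal a b).1 h1) ((mem_lIdeal b a).1 h2)
  · intro h
    ext x
    rw [mem_lIdeal, mem_lIdeal, h]

lemma jRel_iff (a b : GD) : jRel a b ↔ a.idx = b.idx := by
  constructor
  · intro h
    have h1 : b ∈ jIdeal a := h ▸ (mem_jIdeal b b).2 (dvd_refl _)
    have h2 : a ∈ jIdeal b := h ▸ (mem_jIdeal a a).2 (dvd_refl _)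
    exact pnat_dvd_antisymm ((mem_jIdeal a b).1 h1) ((mem_jIdeal b a).1 h2)
  · intro h
    ext x
    rw [mem_jIdeal, mem_jIdeal, h]

lemma rRel_iff (a b : GD) : rRel a b ↔ a = b := by
  constructor
  · intro h
    have h1 : b ∈ rIdeal a := h ▸ (mem_rIdeal b b).2 ⟨rfl, dvd_refl _⟩
    have h2 : a ∈ rIdeal b := h ▸ (mem_rIdeal a a).2 ⟨rfl, dvd_refl _⟩
    rw [mem_rIdeal] at h1 h2
    exact GD.eq_of a b h2.1 (pnat_dvd_antisymm h1.2 h2.2)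
  · rintro rfl; rfl

lemma dRel_iff (a b : GD) : dRel a b ↔ a.idx = b.idx := by
  constructor
  · rintro ⟨c, hl, hr⟩
    rw [rRel_iff] at hr
    subst hr
    exact (lRel_iff a c).1 hl
  · intro h
    exact ⟨b, (lRel_iff a b).2 h, rfl⟩

/-- Description of `𝓓` on `S`, and `𝓓 = 𝓙`. -/
theorem stmt17 :
    (∀ a b : GD, dRel a b ↔
      (a = b ∨ ∃ k : ℕ+, (a = GD.g k ∨ a = GD.d k) ∧ (b = GD.g k ∨ b = GD.d k))) ∧
    (∀ a b : GD, dRel a b ↔ jRel a b) := by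
  constructor
  · intro a b
    rw [dRel_iff]
    constructor
    · intro h
      right
      refine ⟨a.idx, ?_, ?_⟩
      · cases a <;> simp [GD.idx]
      · rw [h]; cases b <;> simp [GD.idx]
    · rintro (rfl | ⟨k, (rfl | rfl), (rfl | rfl)⟩) <;> rfl
  · intro a b
    rw [dRel_iff, jRel_iff]
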